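/- arXiv:2604.13544 — 3 statements merged into one kernel-verified Lean document; each statement's English description precedes it below -/
import Mathlib

section
/- If E₀ is a perfect subset of the Cantor set that is open in its closure, and E₀ is nonempty, then E₀ is homeomorphic either to the Cantor set or to the Cantor set with one point removed. -/
/-!
A nonempty closed perfect set `C ⊆ ℕ → Bool` is homeomorphic to `ℕ → Bool` (Brouwer): the piece
`C ∩ cylinder x n` stays in a single cylinder up to the first level `m` at which it branches, and
there it splits into two pieces of the same kind. Iterating, a binary sequence `a` picks a nested
sequence of pieces whose levels tend to infinity; their common point gives a continuous bijection
`(ℕ → Bool) → C`, hence a homeomorphism by compactness.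

If `E₀ = U ∩ closure E₀` is not closed, write the open set `U` as a disjoint union of countably
many clopen sets `W n`. Each nonempty `W n ∩ E₀ = W n ∩ closure E₀` is closed and perfect, hence a
copy of the Cantor space, and infinitely many are nonempty since `E₀` is not closed; so
`E₀ ≃ₜ ℕ × (ℕ → Bool)`. The punctured Cantor space is itself such a set.
-/

open PiNat Set Function Topology Filter TopologicalSpace

namespace PiNat

variable {E : ℕ → Type*}

theorem mem_cylinder_succ {x y : ∀ n, E n} {n : ℕ} :
    y ∈ cylinder x (n + 1) ↔ y ∈ cylinder x n ∧ y n = x n := by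
  simp only [mem_cylinder_iff, Nat.lt_succ_iff_lt_or_eq, or_imp, forall_and, forall_eq]

theorem tendsto_of_mem_cylinder [∀ n, TopologicalSpace (E n)] {u : ℕ → ∀ n, E n} {x : ∀ n, E n}
    (h : ∀ k, u k ∈ cylinder x k) : Tendsto u atTop (𝓝 x) :=
  tendsto_pi_nhds.2 fun i => tendsto_const_nhds.congr' <|
    (eventually_gt_atTop i).mono fun k hk => (h k i hk).symm

instance perfectSpace [∀ n, TopologicalSpace (E n)] [∀ n, DiscreteTopology (E n)]
    [∀ n, Nontrivial (E n)] : PerfectSpace (∀ n, E n) := by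
  refine ⟨preperfect_iff_nhds.2 fun x _ U hU => ?_⟩
  obtain ⟨-, ⟨y, n, rfl⟩, hx, hU⟩ := (isTopologicalBasis_cylinders E).mem_nhds_iff.1 hU
  obtain ⟨b, hb⟩ := exists_ne (x n)
  refine ⟨update x n b, ⟨hU ?_, trivial⟩, fun h => hb (by simpa using congrFun h n)⟩
  rw [← mem_cylinder_iff_eq.1 hx]
  exact update_mem_cylinder x n b

end PiNat

theorem IsOpen.exists_iUnion_isClopen {X : Type*} [TopologicalSpace X] [SecondCountableTopology X]
    (hB : IsTopologicalBasis {s : Set X | IsClopen s}) {U : Set X} (hU : IsOpen U) :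
    ∃ W : ℕ → Set X, (∀ n, IsClopen (W n)) ∧ Pairwise (Disjoint on W) ∧ ⋃ n, W n = U := by
  have : ∀ x : U, ∃ c : Set X, IsClopen c ∧ (x : X) ∈ c ∧ c ⊆ U := fun x =>
    hB.exists_subset_of_mem_open x.2 hU
  choose c hc hxc hcU using this
  obtain ⟨T, hTc, hT⟩ := isOpen_iUnion_countable c fun x => (hc x).isOpen
  obtain ⟨V, hV⟩ := ((hTc.image c).insert ∅).exists_eq_range (insert_nonempty _ _)
  have hVclopen : ∀ n, IsClopen (V n) := by
    intro n
    obtain h | ⟨x, -, h⟩ : V n ∈ insert ∅ (c '' T) := hV ▸ mem_range_self n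
    · exact h ▸ isClopen_empty
    · exact h ▸ hc x
  have hVU : ⋃ n, V n = U := by
    rw [← sUnion_range, ← hV, sUnion_insert, sUnion_image, empty_union, hT]
    exact (iUnion_subset hcU).antisymm fun x hx => mem_iUnion.2 ⟨⟨x, hx⟩, hxc _⟩
  refine ⟨disjointed V, fun n => ?_, disjoint_disjointed V, iUnion_disjointed.trans hVU⟩
  rw [disjointed_eq_inter_compl]
  exact (hVclopen n).inter ((finite_lt_nat n).isClopen_biInter fun j _ => (hVclopen j).compl)

theorem nonempty_homeomorph_prod_of_subset_iUnion {X Y ι : Type*} [TopologicalSpace X]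
    [TopologicalSpace Y] [TopologicalSpace ι] [DiscreteTopology ι] {S : Set X} {W : ι → Set X}
    (hW : ∀ i, IsOpen (W i)) (hdisj : Pairwise (Disjoint on W)) (hS : S ⊆ ⋃ i, W i)
    (he : ∀ i, Nonempty (↥(W i ∩ S) ≃ₜ Y)) : Nonempty (S ≃ₜ ι × Y) := by
  have e := fun i => (he i).some
  let F : ι × Y → S := fun p => inclusion inter_subset_right ((e p.1).symm p.2)
  have hslice : ∀ i, IsOpenEmbedding fun y => F (i, y) := fun i =>
    (IsOpenEmbedding.inclusion inter_subset_right (by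
      simpa [preimage_inter] using (hW i).preimage continuous_subtype_val)).comp
      (e i).symm.isOpenEmbedding
  have hinj : Injective F := by
    rintro ⟨i, y⟩ ⟨j, y'⟩ h
    obtain rfl : i = j := by
      by_contra hij
      exact (hdisj hij).ne_of_mem ((e i).symm y).2.1 ((e j).symm y').2.1 (congrArg Subtype.val h)
    simpa using (hslice i).injective h
  have hsurj : Surjective F := by
    rintro ⟨x, hx⟩
    obtain ⟨i, hi⟩ := mem_iUnion.1 (hS hx)
    exact ⟨(i, e i ⟨x, hi, hx⟩), by simp [F]⟩
  have hF : IsHomeomorph F :=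
    ⟨continuous_prod_of_discrete_left.2 fun i => (hslice i).continuous,
      isOpenMap_prod_of_discrete_left.2 fun i => (hslice i).isOpenMap, hinj, hsurj⟩
  exact ⟨(hF.homeomorph F).symm⟩

/-- Inside `C`, the cylinder of `x` of length `n` stays in the cylinder of length `m` and branches
at level `m`: `z` is a point of `C` on the other branch. -/
structure IsBranching (C : Set (ℕ → Bool)) (x : ℕ → Bool) (n m : ℕ) (z : ℕ → Bool) : Prop where
  le : n ≤ m
  subset : C ∩ cylinder x n ⊆ cylinder x m
  mem : z ∈ C
  mem_cylinder : z ∈ cylinder x m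
  apply_ne : z m ≠ x m

theorem Preperfect.exists_isBranching {C : Set (ℕ → Bool)} (hC : Preperfect C) {x : ℕ → Bool}
    (hx : x ∈ C) (n : ℕ) : ∃ m z, IsBranching C x n m z := by
  obtain ⟨y, ⟨hyn, hyC⟩, hyx⟩ := preperfect_iff_nhds.1 hC x hx _
    ((isOpen_cylinder _ x n).mem_nhds (self_mem_cylinder x n))
  have hsplit : ∃ m, ¬ C ∩ cylinder x n ⊆ cylinder x (m + 1) := by
    refine ⟨firstDiff y x, fun h => ?_⟩
    exact apply_firstDiff_ne hyx (mem_cylinder_succ.1 (h ⟨hyC, hyn⟩)).2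
  classical
  set M := Nat.find hsplit
  have hM : C ∩ cylinder x n ⊆ cylinder x M := by
    cases hM : M with
    | zero => simp [cylinder_zero]
    | succ k => exact not_not.1 (Nat.find_min hsplit (show k < M by omega))
  obtain ⟨z, hz, hzM⟩ := not_subset.1 (Nat.find_spec hsplit)
  refine ⟨M, z, ?_, hM, hz.1, hM hz, fun h => hzM (mem_cylinder_succ.2 ⟨hM hz, h⟩)⟩
  by_contra! h
  exact Nat.find_spec hsplit fun w hw => cylinder_anti x h hw.2

namespace CantorTree

variable (s : (ℕ → Bool) → ℕ → ℕ × (ℕ → Bool))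

/-- A node `p` stands for the piece `C ∩ cylinder p.1 p.2`; `s` supplies the branching data. -/
def child (p : (ℕ → Bool) × ℕ) (b : Bool) : (ℕ → Bool) × ℕ :=
  (bif b then (s p.1 p.2).2 else p.1, (s p.1 p.2).1 + 1)

def node (x₀ a : ℕ → Bool) : ℕ → (ℕ → Bool) × ℕ
  | 0 => (x₀, 0)
  | k + 1 => child s (node x₀ a k) (a k)

/-- The `i`-th coordinate is read off at node `i + 1`, whose level already exceeds `i`. -/
def limit (x₀ a : ℕ → Bool) : ℕ → Bool := fun i => (node s x₀ a (i + 1)).1 i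

theorem node_congr {x₀ a a' : ℕ → Bool} {k : ℕ} (h : ∀ j < k, a j = a' j) :
    node s x₀ a k = node s x₀ a' k := by
  induction k with
  | zero => rfl
  | succ k ih => simp only [node, ih fun j hj => h j (by omega), h k k.lt_succ_self]

variable {s} {C : Set (ℕ → Bool)} (hs : ∀ x n, x ∈ C → IsBranching C x n (s x n).1 (s x n).2)
include hs

section Child

variable {p : (ℕ → Bool) × ℕ} (hp : p.1 ∈ C)
include hp

theorem child_fst_mem (b : Bool) : (child s p b).1 ∈ C := by
  cases b
  · exact hp
  · exact (hs _ p.2 hp).mem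

theorem lt_child_snd (b : Bool) : p.2 < (child s p b).2 := by
  have := (hs _ p.2 hp).le
  simp only [child]
  omega

theorem cylinder_child_subset (b : Bool) :
    cylinder (child s p b).1 (child s p b).2 ⊆ cylinder p.1 p.2 := by
  have h := hs _ p.2 hp
  cases b
  · exact cylinder_anti _ (by simp only [child]; linarith [h.le])
  · calc cylinder (s p.1 p.2).2 ((s p.1 p.2).1 + 1) ⊆ cylinder (s p.1 p.2).2 (s p.1 p.2).1 :=
          cylinder_anti _ (Nat.le_succ _)
      _ = cylinder p.1 (s p.1 p.2).1 := mem_cylinder_iff_eq.1 h.mem_cylinder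
      _ ⊆ cylinder p.1 p.2 := cylinder_anti _ h.le

theorem disjoint_cylinder_child {b b' : Bool} (hb : b ≠ b') :
    Disjoint (cylinder (child s p b).1 (child s p b).2)
      (cylinder (child s p b').1 (child s p b').2) := by
  have key : Disjoint (cylinder (child s p false).1 (child s p false).2)
      (cylinder (child s p true).1 (child s p true).2) := by
    refine disjoint_left.2 fun w h₀ h₁ => (hs _ p.2 hp).apply_ne ?_
    exact (mem_cylinder_succ.1 h₁).2.symm.trans (mem_cylinder_succ.1 h₀).2
  cases b <;> cases b'
  all_goals first | exact absurd rfl hb | exact key | exact key.symm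

theorem exists_mem_cylinder_child {w : ℕ → Bool} (hw : w ∈ C) (hwp : w ∈ cylinder p.1 p.2) :
    ∃ b, w ∈ cylinder (child s p b).1 (child s p b).2 := by
  have h := hs _ p.2 hp
  have hwm := h.subset ⟨hw, hwp⟩
  by_cases hb : w (s p.1 p.2).1 = p.1 (s p.1 p.2).1
  · exact ⟨false, mem_cylinder_succ.2 ⟨hwm, hb⟩⟩
  · refine ⟨true, mem_cylinder_succ.2 ⟨(mem_cylinder_iff_eq.1 h.mem_cylinder).symm ▸ hwm, ?_⟩⟩
    exact (Bool.eq_not_iff.2 hb).trans (Bool.eq_not_iff.2 h.apply_ne).symm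

end Child

variable {x₀ : ℕ → Bool} (hx₀ : x₀ ∈ C)
include hx₀

theorem node_fst_mem (a : ℕ → Bool) (k : ℕ) : (node s x₀ a k).1 ∈ C := by
  induction k with
  | zero => exact hx₀
  | succ k ih => exact child_fst_mem hs ih _

theorem le_node_snd (a : ℕ → Bool) (k : ℕ) : k ≤ (node s x₀ a k).2 := by
  induction k with
  | zero => exact le_rfl
  | succ k ih => exact ih.trans_lt (lt_child_snd hs (node_fst_mem hs hx₀ a k) _)

theorem cylinder_node_subset (a : ℕ → Bool) {k l : ℕ} (hkl : k ≤ l) :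
    cylinder (node s x₀ a l).1 (node s x₀ a l).2 ⊆
      cylinder (node s x₀ a k).1 (node s x₀ a k).2 := by
  induction l, hkl using Nat.le_induction with
  | base => exact subset_rfl
  | succ l _ ih => exact (cylinder_child_subset hs (node_fst_mem hs hx₀ a l) _).trans ih

theorem limit_mem_cylinder_node (a : ℕ → Bool) (k : ℕ) :
    limit s x₀ a ∈ cylinder (node s x₀ a k).1 (node s x₀ a k).2 := by
  intro i hi
  rcases le_total (i + 1) k with h | h
  · have hk := cylinder_node_subset hs hx₀ a h (self_mem_cylinder _ _)
    exact (hk i ((le_node_snd hs hx₀ a (i + 1)).trans_lt' i.lt_succ_self)).symm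
  · exact cylinder_node_subset hs hx₀ a h (self_mem_cylinder _ _) i hi

theorem limit_mem_cylinder_of_mem_cylinder_node {a w : ℕ → Bool} {k : ℕ}
    (hw : w ∈ cylinder (node s x₀ a k).1 (node s x₀ a k).2) : limit s x₀ a ∈ cylinder w k := by
  have h := limit_mem_cylinder_node hs hx₀ a k
  rw [← mem_cylinder_iff_eq.1 hw] at h
  exact cylinder_anti w (le_node_snd hs hx₀ a k) h

theorem limit_mem (hC : IsClosed C) (a : ℕ → Bool) : limit s x₀ a ∈ C := by
  refine hC.mem_of_tendsto (tendsto_of_mem_cylinder fun k => ?_)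
    (Eventually.of_forall (node_fst_mem hs hx₀ a))
  exact (mem_cylinder_comm _ _ _).1
    (limit_mem_cylinder_of_mem_cylinder_node hs hx₀ (self_mem_cylinder _ _))

omit hs hx₀ in
theorem continuous_limit : Continuous (limit s x₀) := by
  refine continuous_pi fun i => IsLocallyConstant.continuous ?_
  refine (IsLocallyConstant.iff_eventually_eq _).2 fun a => ?_
  filter_upwards [(isOpen_cylinder _ a (i + 1)).mem_nhds (self_mem_cylinder a (i + 1))] with a' ha'
  simp only [limit, node_congr s fun j hj => ha' j hj]

theorem injective_limit : Injective (limit s x₀) := by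
  intro a a' h
  by_contra hne
  set k := firstDiff a a'
  have hk : node s x₀ a' k = node s x₀ a k :=
    node_congr s fun j hj => (apply_eq_of_lt_firstDiff hj).symm
  have h₁ := limit_mem_cylinder_node hs hx₀ a (k + 1)
  have h₂ := limit_mem_cylinder_node hs hx₀ a' (k + 1)
  simp only [node, hk] at h₁ h₂
  exact (disjoint_cylinder_child hs (node_fst_mem hs hx₀ a k) (apply_firstDiff_ne hne)).ne_of_mem
    h₁ h₂ h

theorem exists_mem_cylinder_node {w : ℕ → Bool} (hw : w ∈ C) (k : ℕ) :
    ∃ a, w ∈ cylinder (node s x₀ a k).1 (node s x₀ a k).2 := by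
  induction k with
  | zero => exact ⟨w, by simp [node, cylinder_zero]⟩
  | succ k ih =>
    obtain ⟨a, ha⟩ := ih
    obtain ⟨b, hb⟩ := exists_mem_cylinder_child hs (node_fst_mem hs hx₀ a k) hw ha
    have hk : node s x₀ (update a k b) k = node s x₀ a k :=
      node_congr s fun j hj => update_of_ne hj.ne _ _
    exact ⟨update a k b, by simpa only [node, hk, update_self] using hb⟩

theorem range_limit (hC : IsClosed C) : range (limit s x₀) = C := by
  refine (range_subset_iff.2 (limit_mem hs hx₀ hC)).antisymm fun w hw => ?_
  choose a ha using exists_mem_cylinder_node hs hx₀ hw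
  exact (isCompact_range continuous_limit).isClosed.mem_of_tendsto
    (tendsto_of_mem_cylinder fun k => limit_mem_cylinder_of_mem_cylinder_node hs hx₀ (ha k))
    (Eventually.of_forall fun k => mem_range_self _)

end CantorTree

open CantorTree in
theorem Perfect.nonempty_homeomorph_nat_bool {C : Set (ℕ → Bool)} (hC : Perfect C)
    (hne : C.Nonempty) : Nonempty (C ≃ₜ (ℕ → Bool)) := by
  obtain ⟨x₀, hx₀⟩ := hne
  have : ∀ x n, ∃ p : ℕ × (ℕ → Bool), x ∈ C → IsBranching C x n p.1 p.2 := by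
    intro x n
    by_cases hx : x ∈ C
    · obtain ⟨m, z, h⟩ := hC.acc.exists_isBranching hx n
      exact ⟨(m, z), fun _ => h⟩
    · exact ⟨(n, x), fun h => absurd h hx⟩
  choose s hs using this
  have hf : IsHomeomorph (codRestrict (limit s x₀) C (limit_mem hs hx₀ hC.closed)) := by
    refine isHomeomorph_iff_continuous_bijective.2
      ⟨continuous_limit.codRestrict _, (injective_limit hs hx₀).codRestrict _, ?_⟩
    rintro ⟨w, hw⟩
    obtain ⟨a, rfl⟩ := (range_limit hs hx₀ hC.closed).ge hw
    exact ⟨a, rfl⟩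
  exact ⟨(hf.homeomorph _).symm⟩

theorem nonempty_homeomorph_nat_prod_of_not_isClosed {S : Set (ℕ → Bool)} (hS : Preperfect S)
    (hopen : ∃ U, IsOpen U ∧ S = U ∩ closure S) (hcl : ¬ IsClosed S) :
    Nonempty (S ≃ₜ ℕ × (ℕ → Bool)) := by
  obtain ⟨U, hU, hSU⟩ := hopen
  obtain ⟨W, hWc, hWd, hWU⟩ := hU.exists_iUnion_isClopen isTopologicalBasis_isClopen
  have hpiece : ∀ n, W n ∩ S = W n ∩ closure S := fun n =>
    calc W n ∩ S = W n ∩ (U ∩ closure S) := by rw [← hSU]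
      _ = W n ∩ closure S := by
        rw [← inter_assoc, inter_eq_left.2 ((subset_iUnion W n).trans hWU.le)]
  have hperfect : ∀ n, Perfect (W n ∩ S) := fun n => by
    rw [hpiece]
    exact ⟨(hWc n).isClosed.inter isClosed_closure,
      hS.perfect_closure.acc.open_inter (hWc n).isOpen⟩
  let I := {n | (W n ∩ S).Nonempty}
  have hSI : S ⊆ ⋃ n : I, W n := fun x hx => by
    obtain ⟨n, hn⟩ := mem_iUnion.1 (hWU.ge (hSU.le hx).1)
    exact mem_iUnion.2 ⟨⟨n, x, hn, hx⟩, hn⟩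
  have hI : I.Infinite := fun hfin => hcl <| by
    have := hfin.to_subtype
    rw [← inter_eq_right.2 hSI, iUnion_inter]
    exact isClosed_iUnion_of_finite fun n => (hperfect n).closed
  have := hI.to_subtype
  obtain ⟨_⟩ := nonempty_denumerable I
  obtain ⟨e⟩ := nonempty_homeomorph_prod_of_subset_iUnion (fun n : I => (hWc n).isOpen)
    (hWd.comp_of_injective Subtype.val_injective) hSI
    fun n => (hperfect n).nonempty_homeomorph_nat_bool n.2
  exact ⟨e.trans ((Homeomorph.ofDiscrete (Denumerable.eqv I)).prodCongr (Homeomorph.refl _))⟩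

/-- (Reichbach) If `E₀` is a nonempty perfect subset of the Cantor set (here the Cantor
space `ℕ → Bool`) which is open in its closure, then `E₀` is homeomorphic either to the
Cantor set or to the Cantor set with one point removed. -/
theorem perfect_open_in_closure_homeomorphic_cantor_or_cantor_minus_point
    (E₀ : Set (ℕ → Bool)) (hne : E₀.Nonempty) (hperf : Preperfect E₀)
    (hopen : ∃ U : Set (ℕ → Bool), IsOpen U ∧ E₀ = U ∩ closure E₀) :
    Nonempty (E₀ ≃ₜ (ℕ → Bool)) ∨
      Nonempty (E₀ ≃ₜ {x : ℕ → Bool // x ≠ fun _ => false}) := by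
  by_cases hcl : IsClosed E₀
  · exact .inl (Perfect.nonempty_homeomorph_nat_bool ⟨hcl, hperf⟩ hne)
  · obtain ⟨e₁⟩ := nonempty_homeomorph_nat_prod_of_not_isClosed hperf hopen hcl
    obtain ⟨e₂⟩ := nonempty_homeomorph_nat_prod_of_not_isClosed (S := {x | x ≠ fun _ => false})
      isOpen_ne.preperfect ⟨_, isOpen_ne, (inter_eq_left.2 subset_closure).symm⟩
      fun h => not_isOpen_singleton _ (isClosed_compl_iff.1 h)
    exact .inr ⟨e₁.trans e₂.symm⟩
end

section
/- Any locally-𝒩 topological space is regular: if X is a Hausdorff second countable space with a basis of open sets U each homeomorphic to ℝ² \ ℚ² and with frontier ∂U homeomorphic to the circle S¹, then X is a regular topological space. -/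
/-!
A point `x` of a basic open set `U ⊆ V` is separated, in the Hausdorff space `X`, from the
compact set `frontier U \ interior V`; the closed neighbourhood `closure U ∩ C` of `x` obtained
from a closed neighbourhood `C` avoiding that compact set then lies in `V`. Compactness of the
frontiers comes from their being circles.
-/

open Set Filter Topology TopologicalSpace

section

variable {X : Type*} [TopologicalSpace X]

theorem IsCompact.exists_isClosed_mem_nhds_disjoint [T2Space X] {K : Set X} (hK : IsCompact K)
    {x : X} (hx : x ∉ K) : ∃ C ∈ 𝓝 x, IsClosed C ∧ Disjoint C K := by
  obtain ⟨W, W', hWo, hW'o, hKW, hxW', hdisj⟩ := hK.separation_of_notMem hx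
  exact ⟨closure W', mem_of_superset (hW'o.mem_nhds hxW') subset_closure, isClosed_closure,
    (hdisj.symm.closure_left hWo).mono_right hKW⟩

theorem RegularSpace.of_isTopologicalBasis_isCompact_frontier [T2Space X] {B : Set (Set X)}
    (hB : IsTopologicalBasis B) (hK : ∀ U ∈ B, IsCompact (frontier U)) : RegularSpace X := by
  refine .of_exists_mem_nhds_isClosed_subset fun x V hV => ?_
  obtain ⟨U, hUB, hxU, hUV⟩ := hB.mem_nhds_iff.mp (interior_mem_nhds.mpr hV)
  obtain ⟨C, hC, hCc, hCK⟩ :=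
    ((hK U hUB).diff isOpen_interior).exists_isClosed_mem_nhds_disjoint fun h => h.2 (hUV hxU)
  have hU : closure U ∈ 𝓝 x := mem_of_superset ((hB.isOpen hUB).mem_nhds hxU) subset_closure
  refine ⟨closure U ∩ C, inter_mem hU hC, isClosed_closure.inter hCc, fun y ⟨hyU, hyC⟩ => ?_⟩
  rw [closure_eq_self_union_frontier] at hyU
  rcases hyU with hyU | hyU
  · exact interior_subset (hUV hyU)
  · by_contra hyV
    exact disjoint_left.mp hCK hyC ⟨hyU, fun h => hyV (interior_subset h)⟩

end

theorem locally_N_space_regular_general (X : Type*) [TopologicalSpace X] [T2Space X]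
    (B : Set (Set X))
    (hB : TopologicalSpace.IsTopologicalBasis B)
    (hS : ∀ U ∈ B, Nonempty
      ((frontier U) ≃ₜ (Metric.sphere (0 : EuclideanSpace ℝ (Fin 2)) 1))) :
    RegularSpace X :=
  .of_isTopologicalBasis_isCompact_frontier hB fun U hU =>
    let ⟨e⟩ := hS U hU
    isCompact_iff_compactSpace.mpr e.symm.compactSpace

/-- Any locally-`𝒩` space is regular: if `X` is a Hausdorff second countable space with a
basis of open sets `U` each homeomorphic to `ℝ² \ ℚ²` and with frontier homeomorphic to
the circle `S¹`, then `X` is regular. -/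
theorem locally_N_space_regular (X : Type*) [TopologicalSpace X] [T2Space X]
    [SecondCountableTopology X] (B : Set (Set X))
    (hB : TopologicalSpace.IsTopologicalBasis B)
    (hN : ∀ U ∈ B, Nonempty
      (U ≃ₜ {p : ℝ × ℝ | ¬ ((∃ a : ℚ, (a : ℝ) = p.1) ∧ (∃ b : ℚ, (b : ℝ) = p.2))}))
    (hS : ∀ U ∈ B, Nonempty
      ((frontier U) ≃ₜ (Metric.sphere (0 : EuclideanSpace ℝ (Fin 2)) 1))) :
    RegularSpace X :=
  locally_N_space_regular_general X B hB hS
end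

section
/- Let A₀ and A₁ be countable dense subsets of ℝ². Then there exists a homeomorphism of ℝ² mapping A₀ onto A₁. -/
/-!
After a shear `(x, y) ↦ (y + c x, x)` with a generic slope `c`, both sets have pairwise distinct
first coordinates. A back-and-forth enumeration then matches `A` with `B` so that first
coordinates are matched monotonically, while a bounded continuous `shift` with
`shift b.1 = b.2 - a.2` on matched pairs `(a, b)` is corrected by a geometrically small amount at
each stage (Urysohn). The monotone matching of first coordinates extends to an order isomorphism
`g` of `ℝ`, the shifts converge uniformly to some `f`, and `(x, y) ↦ (g x, y + f (g x))` is the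
required homeomorphism.
-/

open Set Filter BoundedContinuousFunction

section OrderIsoExtension

variable {ι α β : Type*}

theorem exists_strictMono_extend_of_cmp_eq [LinearOrder α] [TopologicalSpace α] [OrderTopology α]
    [DenselyOrdered α] [NoMinOrder α] [NoMaxOrder α] [ConditionallyCompleteLinearOrder β]
    (u : ι → α) (v : ι → β) (huv : ∀ i j, cmp (u i) (u j) = cmp (v i) (v j))
    (hu : Dense (range u)) : ∃ g : α → β, StrictMono g ∧ ∀ i, g (u i) = v i := by
  have hne : ∀ x, (v '' {i | u i ≤ x}).Nonempty := fun x => by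
    obtain ⟨_, ⟨i, rfl⟩, hi⟩ := hu.exists_lt x
    exact ⟨v i, i, hi.le, rfl⟩
  have hbdd : ∀ x, BddAbove (v '' {i | u i ≤ x}) := fun x => by
    obtain ⟨_, ⟨j, rfl⟩, hj⟩ := hu.exists_gt x
    refine ⟨v j, ?_⟩
    rintro _ ⟨i, hi, rfl⟩
    exact ((lt_iff_lt_of_cmp_eq_cmp (huv i j)).1 (hi.trans_lt hj)).le
  set g : α → β := fun x => sSup (v '' {i | u i ≤ x})
  have le_g : ∀ x i, u i ≤ x → v i ≤ g x := fun x i hi => le_csSup (hbdd x) ⟨i, hi, rfl⟩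
  have g_le : ∀ x i, x ≤ u i → g x ≤ v i := fun x i hi => csSup_le (hne x) <| by
    rintro _ ⟨j, hj, rfl⟩
    exact (le_iff_le_of_cmp_eq_cmp (huv j i)).1 (hj.trans hi)
  refine ⟨g, fun x y hxy => ?_, fun i => (g_le _ i le_rfl).antisymm (le_g _ i le_rfl)⟩
  obtain ⟨_, ⟨i, rfl⟩, hxi, hiy⟩ := hu.exists_between hxy
  obtain ⟨_, ⟨j, rfl⟩, hij, hjy⟩ := hu.exists_between hiy
  calc g x ≤ v i := g_le x i hxi.le
    _ < v j := (lt_iff_lt_of_cmp_eq_cmp (huv i j)).1 hij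
    _ ≤ g y := le_g y j hjy.le

theorem exists_orderIso_extend_of_cmp_eq
    [ConditionallyCompleteLinearOrder α] [TopologicalSpace α] [OrderTopology α]
    [DenselyOrdered α] [NoMinOrder α] [NoMaxOrder α]
    [ConditionallyCompleteLinearOrder β] [TopologicalSpace β] [OrderTopology β]
    [DenselyOrdered β] [NoMinOrder β] [NoMaxOrder β]
    (u : ι → α) (v : ι → β) (huv : ∀ i j, cmp (u i) (u j) = cmp (v i) (v j))
    (hu : Dense (range u)) (hv : Dense (range v)) : ∃ g : α ≃o β, ∀ i, g (u i) = v i := by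
  obtain ⟨g, hg_mono, hg⟩ := exists_strictMono_extend_of_cmp_eq u v huv hu
  obtain ⟨g', hg'_mono, hg'⟩ :=
    exists_strictMono_extend_of_cmp_eq v u (fun i j => (huv i j).symm) hv
  have hg_cont : Continuous g := hg_mono.monotone.continuous_of_denseRange <|
    hv.mono (range_subset_iff.2 fun i => ⟨u i, hg i⟩)
  have hg'_cont : Continuous g' := hg'_mono.monotone.continuous_of_denseRange <|
    hu.mono (range_subset_iff.2 fun i => ⟨v i, hg' i⟩)
  have hinv : Function.RightInverse g' g := congrFun <|
    Continuous.ext_on hv (hg_cont.comp hg'_cont) continuous_id <| by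
      rintro _ ⟨i, rfl⟩
      simp [hg', hg]
  exact ⟨hg_mono.orderIsoOfRightInverse g g' hinv, hg⟩

end OrderIsoExtension

theorem BoundedContinuousFunction.exists_apply_eq_eqOn_dist_le {X : Type*} [TopologicalSpace X]
    [NormalSpace X] [T1Space X] (F : X →ᵇ ℝ) {Z : Set X} (hZ : IsClosed Z) {x : X} (hx : x ∉ Z)
    (v : ℝ) : ∃ F' : X →ᵇ ℝ, F' x = v ∧ EqOn F' F Z ∧ dist F' F ≤ |v - F x| := by
  obtain ⟨φ, hφZ, hφx, hφ⟩ :=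
    exists_bounded_zero_one_of_closed hZ isClosed_singleton (disjoint_singleton_right.2 hx)
  refine ⟨F + (v - F x) • φ, ?_, fun z hz => ?_, (dist_le (abs_nonneg _)).2 fun y => ?_⟩
  · simp [hφx rfl]
  · simp [hφZ hz]
  · simpa [Real.dist_eq, abs_mul, abs_of_nonneg (hφ y).1] using
      mul_le_of_le_one_right (abs_nonneg _) (hφ y).2

section Gap

variable {ι α β : Type*} [LinearOrder α] [LinearOrder β]

theorem isOpen_setOf_forall_cmp_eq [TopologicalSpace β] [OrderClosedTopology β] (P : Finset ι)
    (u : ι → α) (v : ι → β) {x : α} (hx : ∀ i ∈ P, u i ≠ x) :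
    IsOpen {y | ∀ i ∈ P, cmp (u i) x = cmp (v i) y} := by
  simp only [ofPred_forall]
  refine isOpen_biInter_finset fun i hi => ?_
  rcases (hx i hi).lt_or_gt with h | h
  · simp only [(cmp_eq_lt_iff _ _).2 h, eq_comm (a := Ordering.lt), cmp_eq_lt_iff]
    exact isOpen_Ioi
  · simp only [(cmp_eq_gt_iff _ _).2 h, eq_comm (a := Ordering.gt), cmp_eq_gt_iff]
    exact isOpen_Iio

theorem exists_forall_cmp_eq [DenselyOrdered β] [NoMinOrder β] [NoMaxOrder β] [Nonempty β]
    (P : Finset ι) (u : ι → α) (v : ι → β)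
    (huv : ∀ i ∈ P, ∀ j ∈ P, cmp (u i) (u j) = cmp (v i) (v j)) (x : α) :
    ∃ y, ∀ i ∈ P, cmp (u i) x = cmp (v i) y := by
  obtain ⟨y, hy⟩ := Order.PartialIso.exists_across
    ⟨P.image fun i => (u i, v i), by simpa using huv⟩ x
  exact ⟨y, by simpa using hy⟩

end Gap

@[simps! apply]
def shearHomeomorph {X G : Type*} [TopologicalSpace X] [AddGroup G] [TopologicalSpace G]
    [IsTopologicalAddGroup G] (f : X → G) (hf : Continuous f) : X × G ≃ₜ X × G where
  toFun q := (q.1, q.2 + f q.1)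
  invFun q := (q.1, q.2 - f q.1)
  left_inv q := by simp
  right_inv q := by simp
  continuous_toFun := by fun_prop
  continuous_invFun := by fun_prop

theorem exists_injOn_add_mul_fst {A : Set (ℝ × ℝ)} (hA : A.Countable) :
    ∃ c : ℝ, InjOn (fun p : ℝ × ℝ => p.2 + c * p.1) A := by
  set bad := (A ×ˢ A).image fun pq : (ℝ × ℝ) × (ℝ × ℝ) => (pq.2.2 - pq.1.2) / (pq.1.1 - pq.2.1)
  obtain ⟨c, hc⟩ : ∃ c, c ∉ bad := by
    by_contra! h
    exact not_countable_univ (((hA.prod hA).image _).mono fun c _ => h c)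
  refine ⟨c, fun p hp q hq hpq => ?_⟩
  by_contra hne
  have hfst : p.1 ≠ q.1 := fun h => hne (Prod.ext h (by simpa [h] using hpq))
  exact hc ⟨(p, q), ⟨hp, hq⟩, by field_simp [sub_ne_zero.2 hfst]; linarith⟩

/-- A finite stage of the back-and-forth construction: every order isomorphism `g` of `ℝ` with
`g a.1 = b.1` for all `(a, b) ∈ pairs`, followed by the shear `(x, y) ↦ (x, y + shift x)`,
sends each `a` to its partner `b`. -/
structure ShearMatching (A B : Set (ℝ × ℝ)) where
  pairs : Finset ((ℝ × ℝ) × (ℝ × ℝ))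
  shift : ℝ →ᵇ ℝ
  fst_mem : ∀ p ∈ pairs, p.1 ∈ A
  snd_mem : ∀ p ∈ pairs, p.2 ∈ B
  cmp_eq : ∀ p ∈ pairs, ∀ q ∈ pairs, cmp p.1.1 q.1.1 = cmp p.2.1 q.2.1
  shift_apply : ∀ p ∈ pairs, shift p.2.1 = p.2.2 - p.1.2

namespace ShearMatching

variable {A B : Set (ℝ × ℝ)}

instance : Inhabited (ShearMatching A B) :=
  ⟨⟨∅, 0, by simp, by simp, by simp, by simp⟩⟩

theorem exists_insert (s : ShearMatching A B) {a b : ℝ × ℝ} (ha : a ∈ A) (hb : b ∈ B)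
    (hcmp : ∀ p ∈ s.pairs, cmp p.1.1 a.1 = cmp p.2.1 b.1) (hfresh : ∀ p ∈ s.pairs, p.2.1 ≠ b.1) :
    ∃ t : ShearMatching A B,
      t.pairs = insert (a, b) s.pairs ∧ dist t.shift s.shift ≤ |b.2 - a.2 - s.shift b.1| := by
  classical
  obtain ⟨F, hFb, hF, hdist⟩ := s.shift.exists_apply_eq_eqOn_dist_le
    (s.pairs.image fun p => p.2.1).isClosed (x := b.1)
    (fun h => let ⟨p, hp, hpb⟩ := Finset.mem_image.1 h; hfresh p hp hpb) (b.2 - a.2)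
  refine ⟨⟨insert (a, b) s.pairs, F, ?_, ?_, ?_, ?_⟩, rfl, hdist⟩
  · simpa [ha] using s.fst_mem
  · simpa [hb] using s.snd_mem
  · intro p hp q hq
    rw [Finset.mem_insert] at hp hq
    rcases hp with rfl | hp <;> rcases hq with rfl | hq
    · simp
    · exact cmp_eq_cmp_symm.1 (hcmp q hq)
    · exact hcmp p hp
    · exact s.cmp_eq p hp q hq
  · simpa [hFb] using fun p hp => (hF (Finset.mem_image_of_mem _ hp)).trans (s.shift_apply p hp)

theorem exists_extend_left (hBd : Dense B) (hAi : InjOn Prod.fst A) (s : ShearMatching A B)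
    {a : ℝ × ℝ} (ha : a ∈ A) {ε : ℝ} (hε : 0 < ε) :
    ∃ t : ShearMatching A B, s.pairs ⊆ t.pairs ∧ (∃ b, (a, b) ∈ t.pairs) ∧
      dist t.shift s.shift ≤ ε := by
  by_cases hmatched : ∃ b, (a, b) ∈ s.pairs
  · exact ⟨s, subset_rfl, hmatched, by simpa using hε.le⟩
  have hfresh : ∀ p ∈ s.pairs, p.1.1 ≠ a.1 := fun p hp h =>
    hmatched ⟨p.2, hAi (s.fst_mem p hp) ha h ▸ hp⟩
  set V := {y | ∀ p ∈ s.pairs, cmp p.1.1 a.1 = cmp p.2.1 y}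
  obtain ⟨y, hy⟩ : V.Nonempty := exists_forall_cmp_eq _ _ _ s.cmp_eq a.1
  have hU : IsOpen (Prod.fst ⁻¹' V ∩ {q | |q.2 - a.2 - s.shift q.1| < ε}) :=
    ((isOpen_setOf_forall_cmp_eq _ _ _ hfresh).preimage continuous_fst).inter
      (isOpen_lt (by fun_prop) continuous_const)
  obtain ⟨b, hb, hbV, hbε⟩ := hBd.exists_mem_open hU ⟨(y, a.2 + s.shift y), hy, by simpa using hε⟩
  obtain ⟨t, ht, hdist⟩ := s.exists_insert ha hb hbV fun p hp h =>
    hfresh p hp ((cmp_eq_eq_iff _ _).1 ((hbV p hp).trans ((cmp_eq_eq_iff _ _).2 h)))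
  exact ⟨t, ht ▸ Finset.subset_insert _ _, ⟨b, ht ▸ Finset.mem_insert_self _ _⟩,
    hdist.trans hbε.le⟩

theorem exists_extend_right (hAd : Dense A) (hBi : InjOn Prod.fst B) (s : ShearMatching A B)
    {b : ℝ × ℝ} (hb : b ∈ B) {ε : ℝ} (hε : 0 < ε) :
    ∃ t : ShearMatching A B, s.pairs ⊆ t.pairs ∧ (∃ a, (a, b) ∈ t.pairs) ∧
      dist t.shift s.shift ≤ ε := by
  by_cases hmatched : ∃ a, (a, b) ∈ s.pairs
  · exact ⟨s, subset_rfl, hmatched, by simpa using hε.le⟩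
  have hfresh : ∀ p ∈ s.pairs, p.2.1 ≠ b.1 := fun p hp h =>
    hmatched ⟨p.1, hBi (s.snd_mem p hp) hb h ▸ hp⟩
  set V := {x | ∀ p ∈ s.pairs, cmp p.2.1 b.1 = cmp p.1.1 x}
  obtain ⟨x, hx⟩ : V.Nonempty :=
    exists_forall_cmp_eq _ _ _ (fun p hp q hq => (s.cmp_eq p hp q hq).symm) b.1
  have hU : IsOpen (Prod.fst ⁻¹' V ∩ {q | |b.2 - q.2 - s.shift b.1| < ε}) :=
    ((isOpen_setOf_forall_cmp_eq _ _ _ hfresh).preimage continuous_fst).inter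
      (isOpen_lt (by fun_prop) continuous_const)
  obtain ⟨a, ha, haV, haε⟩ :=
    hAd.exists_mem_open hU ⟨(x, b.2 - s.shift b.1), hx, by simpa using hε⟩
  obtain ⟨t, ht, hdist⟩ := s.exists_insert ha hb (fun p hp => (haV p hp).symm) hfresh
  exact ⟨t, ht ▸ Finset.subset_insert _ _, ⟨a, ht ▸ Finset.mem_insert_self _ _⟩,
    hdist.trans haε.le⟩

theorem exists_seq (hAc : A.Countable) (hAd : Dense A) (hBc : B.Countable) (hBd : Dense B)
    (hAi : InjOn Prod.fst A) (hBi : InjOn Prod.fst B) :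
    ∃ s : ℕ → ShearMatching A B, Monotone (fun n => (s n).pairs) ∧
      (∀ a ∈ A, ∃ n b, (a, b) ∈ (s n).pairs) ∧ (∀ b ∈ B, ∃ n a, (a, b) ∈ (s n).pairs) ∧
      ∀ n, dist (s n).shift (s (n + 1)).shift ≤ 2 * (1 / 2) ^ n := by
  obtain ⟨e₀, rfl⟩ := hAc.exists_eq_range hAd.nonempty
  obtain ⟨e₁, rfl⟩ := hBc.exists_eq_range hBd.nonempty
  have hstep : ∀ n (s : ShearMatching (range e₀) (range e₁)), ∃ t : ShearMatching _ _,
      s.pairs ⊆ t.pairs ∧ (∃ b, (e₀ n, b) ∈ t.pairs) ∧ (∃ a, (a, e₁ n) ∈ t.pairs) ∧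
      dist s.shift t.shift ≤ 2 * (1 / 2) ^ n := fun n s => by
    have hε : (0 : ℝ) < (1 / 2) ^ n := by positivity
    obtain ⟨s₁, hs₁, hb, hd₁⟩ := s.exists_extend_left hBd hAi (mem_range_self n) hε
    obtain ⟨t, ht, ha, hd₂⟩ := s₁.exists_extend_right hAd hBi (mem_range_self n) hε
    refine ⟨t, hs₁.trans ht, hb.imp fun b hb => ht hb, ha, ?_⟩
    rw [dist_comm]
    linarith [dist_triangle t.shift s₁.shift s.shift]
  choose step hsub hleft hright hdist using hstep
  let s : ℕ → ShearMatching (range e₀) (range e₁) := fun n => Nat.rec default step n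
  refine ⟨s, monotone_nat_of_le_succ fun n => hsub n (s n), ?_, ?_, fun n => hdist n (s n)⟩
  · rintro _ ⟨n, rfl⟩
    exact ⟨n + 1, hleft n (s n)⟩
  · rintro _ ⟨n, rfl⟩
    exact ⟨n + 1, hright n (s n)⟩

theorem image_fst_iUnion_pairs (s : ℕ → ShearMatching A B)
    (h : ∀ a ∈ A, ∃ n b, (a, b) ∈ (s n).pairs) :
    Prod.fst '' ⋃ n, ((s n).pairs : Set ((ℝ × ℝ) × (ℝ × ℝ))) = A := by
  refine Subset.antisymm ?_ fun a ha => ?_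
  · rintro _ ⟨p, hp, rfl⟩
    obtain ⟨n, hp⟩ := mem_iUnion.1 hp
    exact (s n).fst_mem p hp
  · obtain ⟨n, b, hab⟩ := h a ha
    exact ⟨(a, b), mem_iUnion.2 ⟨n, hab⟩, rfl⟩

theorem image_snd_iUnion_pairs (s : ℕ → ShearMatching A B)
    (h : ∀ b ∈ B, ∃ n a, (a, b) ∈ (s n).pairs) :
    Prod.snd '' ⋃ n, ((s n).pairs : Set ((ℝ × ℝ) × (ℝ × ℝ))) = B := by
  refine Subset.antisymm ?_ fun b hb => ?_
  · rintro _ ⟨p, hp, rfl⟩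
    obtain ⟨n, hp⟩ := mem_iUnion.1 hp
    exact (s n).snd_mem p hp
  · obtain ⟨n, a, hab⟩ := h b hb
    exact ⟨(a, b), mem_iUnion.2 ⟨n, hab⟩, rfl⟩

end ShearMatching

theorem exists_homeomorph_image_eq_of_injOn_fst {A B : Set (ℝ × ℝ)} (hAc : A.Countable)
    (hAd : Dense A) (hBc : B.Countable) (hBd : Dense B) (hAi : InjOn Prod.fst A)
    (hBi : InjOn Prod.fst B) : ∃ h : (ℝ × ℝ) ≃ₜ (ℝ × ℝ), h '' A = B := by
  obtain ⟨s, hmono, hA_cov, hB_cov, hdist⟩ := ShearMatching.exists_seq hAc hAd hBc hBd hAi hBi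
  obtain ⟨f, hf⟩ := cauchySeq_tendsto_of_complete <|
    cauchySeq_of_le_geometric (1 / 2) 2 (by norm_num) hdist
  set R := ⋃ n, ((s n).pairs : Set ((ℝ × ℝ) × (ℝ × ℝ)))
  have hR_cmp : ∀ p ∈ R, ∀ q ∈ R, cmp p.1.1 q.1.1 = cmp p.2.1 q.2.1 := by
    simp only [R, mem_iUnion, Finset.mem_coe]
    rintro p ⟨m, hp⟩ q ⟨n, hq⟩
    exact (s (max m n)).cmp_eq p (hmono (le_max_left m n) hp) q (hmono (le_max_right m n) hq)
  have hR_shift : ∀ p ∈ R, f p.2.1 = p.2.2 - p.1.2 := by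
    simp only [R, mem_iUnion, Finset.mem_coe]
    rintro p ⟨n, hp⟩
    exact (isClosed_eq (lipschitz_eval_const _).continuous continuous_const).mem_of_tendsto hf
      (eventually_atTop.2 ⟨n, fun m hm => (s m).shift_apply p (hmono hm hp)⟩)
  have hRA : Prod.fst '' R = A := ShearMatching.image_fst_iUnion_pairs s hA_cov
  have hRB : Prod.snd '' R = B := ShearMatching.image_snd_iUnion_pairs s hB_cov
  have hdense : ∀ {C : Set (ℝ × ℝ)}, Dense C → Dense (Prod.fst '' C) := fun hC =>
    Prod.fst_surjective.denseRange.dense_image continuous_fst hC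
  obtain ⟨g, hg⟩ := exists_orderIso_extend_of_cmp_eq (fun p : R => p.1.1.1) (fun p : R => p.1.2.1)
    (fun p q => hR_cmp p p.2 q q.2)
    (by convert hdense hAd using 1; rw [← hRA, image_image, image_eq_range])
    (by convert hdense hBd using 1; rw [← hRB, image_image, image_eq_range])
  refine ⟨(g.toHomeomorph.prodCongr (Homeomorph.refl ℝ)).trans (shearHomeomorph f f.continuous), ?_⟩
  rw [← hRA, ← hRB, image_image]
  refine image_congr fun p hp => ?_
  simp [hg ⟨p, hp⟩, hR_shift p hp]

/-- (Bennett) Countable dense homogeneity of the plane: if `A₀` and `A₁` are countable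
dense subsets of `ℝ²`, then there is a homeomorphism of `ℝ²` mapping `A₀` onto `A₁`. -/
theorem countable_dense_homogeneous_plane (A₀ A₁ : Set (ℝ × ℝ))
    (h₀c : A₀.Countable) (h₀d : Dense A₀) (h₁c : A₁.Countable) (h₁d : Dense A₁) :
    ∃ h : (ℝ × ℝ) ≃ₜ (ℝ × ℝ), h '' A₀ = A₁ := by
  obtain ⟨c, hc⟩ := exists_injOn_add_mul_fst (h₀c.union h₁c)
  let T : (ℝ × ℝ) ≃ₜ (ℝ × ℝ) :=
    (shearHomeomorph (c * ·) (continuous_const_mul c)).trans (Homeomorph.prodComm ℝ ℝ)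
  have hT : ∀ {A}, A ⊆ A₀ ∪ A₁ → InjOn Prod.fst (T '' A) := fun hA =>
    (hc.mono hA).image_of_comp
  obtain ⟨H, hH⟩ := exists_homeomorph_image_eq_of_injOn_fst (h₀c.image T)
    (T.isDenseEmbedding.dense_image.2 h₀d) (h₁c.image T) (T.isDenseEmbedding.dense_image.2 h₁d)
    (hT subset_union_left) (hT subset_union_right)
  refine ⟨(T.trans H).trans T.symm, ?_⟩
  change (T.symm ∘ H ∘ T) '' A₀ = A₁
  rw [image_comp, image_comp, hH, T.image_symm, T.preimage_image]
end
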